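/- Let p be a prime, z a p-integral rational number, and l a negative integer. Then ord_p [z]_l ≥ (-l - s_{-l})/(p-1), where s_{-l} is the sum of base-p digits of -l. -/

import Mathlib

/-- `[z]_l` over `ℚ`. -/
noncomputable def brkQ (z : ℚ) (l : ℤ) : ℚ :=
  if 0 ≤ l then (∏ k ∈ Finset.range l.toNat, (z + (k : ℚ) + 1))⁻¹
  else ∏ k ∈ Finset.range (-l).toNat, (z - (k : ℚ))

/-- `p`-adic order of a rational, with `ord_p 0 = ∞`. -/
noncomputable def ordQ (p : ℕ) (q : ℚ) : WithTop ℚ :=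
  if q = 0 then ⊤ else ((padicValRat p q : ℚ) : WithTop ℚ)

/-- Key arithmetic lemma: for `p`-integral `z` and `A = ∏_{k<m}(num - k·den)`,
the `p`-adic valuation of `A` is at least that of `m!`. -/
theorem padicValNat_factorial_le_aux (p : ℕ) (hp : p.Prime) (z : ℚ) (hz : ¬ p ∣ z.den)
    (m : ℕ) (hA0 : (∏ k ∈ Finset.range m, (z.num - (k : ℤ) * (z.den : ℤ))) ≠ 0) :
    ((padicValNat p (Nat.factorial m) : ℤ)) ≤
      padicValRat p ((∏ k ∈ Finset.range m, (z.num - (k : ℤ) * (z.den : ℤ)) : ℤ) : ℚ) := by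
  haveI : Fact p.Prime := ⟨hp⟩
  set N : ℕ := padicValNat p (Nat.factorial m) with hN
  set A : ℤ := ∏ k ∈ Finset.range m, (z.num - (k : ℤ) * (z.den : ℤ)) with hAdef
  haveI : NeZero (p ^ N) := ⟨pow_ne_zero _ hp.pos.ne'⟩
  have hcop : (z.den).Coprime (p ^ N) :=
    (((Nat.Prime.coprime_iff_not_dvd hp).mpr hz).symm).pow_right N
  set u : ZMod (p ^ N) := ((z.den : ZMod (p ^ N))⁻¹) * (z.num : ZMod (p ^ N)) with hu
  set c : ℕ := u.val + m * p ^ N with hc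
  have hmc : m ≤ c := by
    have : 1 ≤ p ^ N := Nat.one_le_pow _ _ hp.pos
    calc m = m * 1 := (Nat.mul_one m).symm
      _ ≤ m * p ^ N := Nat.mul_le_mul_left m this
      _ ≤ c := Nat.le_add_left _ _
  have hcu : ((c : ℕ) : ZMod (p ^ N)) = u := by
    rw [hc]
    push_cast
    rw [ZMod.natCast_zmod_val]
    have hz0 : ((p : ZMod (p ^ N))) ^ N = 0 := by
      rw [← Nat.cast_pow, ZMod.natCast_self]
    rw [hz0]
    ring
  have hbc : ((z.den : ZMod (p ^ N))) * ((c : ℕ) : ZMod (p ^ N))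
      = (z.num : ZMod (p ^ N)) := by
    rw [hcu, hu, ← mul_assoc, ZMod.coe_mul_inv_eq_one _ hcop, one_mul]
  set B : ℤ := (z.den : ℤ) ^ m * ∏ k ∈ Finset.range m, ((c : ℤ) - (k : ℤ)) with hB
  -- congruence A ≡ B mod p^N
  have hcong : ((A : ℤ) : ZMod (p ^ N)) = ((B : ℤ) : ZMod (p ^ N)) := by
    rw [hAdef, hB]
    push_cast
    rw [show ((z.den : ZMod (p ^ N)) ^ m)
        = ∏ _x ∈ Finset.range m, (z.den : ZMod (p ^ N)) by
      rw [Finset.prod_const, Finset.card_range], ← Finset.prod_mul_distrib]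
    refine Finset.prod_congr rfl fun k _ => ?_
    have : ((z.num : ℤ) : ZMod (p ^ N)) = (z.den : ZMod (p ^ N)) * ((c : ℕ) : ZMod (p ^ N)) := by
      rw [hbc]
    push_cast at this ⊢
    rw [this]; ring
  have hdvd : ((p : ℤ) ^ N) ∣ (A - B) := by
    have : ((A - B : ℤ) : ZMod (p ^ N)) = 0 := by
      have h2 : ((A : ℤ) : ZMod (p ^ N)) - ((B : ℤ) : ZMod (p ^ N)) = 0 := by
        rw [hcong]; ring
      simpa using h2
    have h2 := (ZMod.intCast_zmod_eq_zero_iff_dvd (A - B) (p ^ N)).mp this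
    exact_mod_cast h2
  -- B is divisible by m! (via descFactorial) and nonzero
  have hprodc : (∏ k ∈ Finset.range m, ((c : ℤ) - (k : ℤ)))
      = ((Nat.descFactorial c m : ℕ) : ℤ) := by
    rw [Nat.descFactorial_eq_prod_range]
    push_cast
    refine (Finset.prod_congr rfl fun k hk => ?_).symm
    have hk' : k ≤ c := le_trans (Nat.le_of_lt (Finset.mem_range.mp hk)) hmc
    push_cast [Nat.cast_sub hk']
    ring
  have hdesc0 : Nat.descFactorial c m ≠ 0 := by
    intro h
    exact absurd (Nat.descFactorial_eq_zero_iff_lt.mp h) (not_lt.mpr hmc)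
  have hden0 : (z.den : ℤ) ≠ 0 := by exact_mod_cast z.den_nz
  have hB0 : B ≠ 0 := by
    rw [hB, hprodc]
    exact mul_ne_zero (pow_ne_zero _ hden0) (by exact_mod_cast hdesc0)
  have hfacB : ((Nat.factorial m : ℕ) : ℤ) ∣ B := by
    rw [hB, hprodc]
    exact Dvd.dvd.mul_left
      (Int.natCast_dvd_natCast.mpr (Nat.factorial_dvd_descFactorial c m)) _
  have hpNB : ((p : ℤ) ^ N) ∣ B := by
    refine dvd_trans ?_ hfacB
    have := pow_padicValNat_dvd (p := p) (n := Nat.factorial m)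
    exact_mod_cast Int.natCast_dvd_natCast.mpr this
  have hvB : (N : ℤ) ≤ padicValRat p ((B : ℤ) : ℚ) := by
    rcases (padicValInt_dvd_iff (p := p) N B).mp hpNB with h | h
    · exact absurd h hB0
    · rw [padicValRat.of_int]; exact_mod_cast h
  -- conclude for A
  by_cases hAB : A = B
  · rw [hAB]; exact hvB
  · have hD0 : A - B ≠ 0 := sub_ne_zero.mpr hAB
    have hvD : (N : ℤ) ≤ padicValRat p (((A - B : ℤ)) : ℚ) := by
      rcases (padicValInt_dvd_iff (p := p) N (A - B)).mp hdvd with h | h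
      · exact absurd h hD0
      · rw [padicValRat.of_int]; exact_mod_cast h
    have hsum : ((B : ℤ) : ℚ) + (((A - B : ℤ)) : ℚ) = ((A : ℤ) : ℚ) := by push_cast; ring
    have hne : ((B : ℤ) : ℚ) + (((A - B : ℤ)) : ℚ) ≠ 0 := by
      rw [hsum]; exact_mod_cast hA0
    have := padicValRat.min_le_padicValRat_add (p := p) hne
    rw [hsum] at this
    exact le_trans (le_min hvB hvD) this

/-- For a `p`-integral rational `z` and a negative integer `l`,
`ord_p [z]_l ≥ (-l - s_{-l})/(p-1)`. -/
theorem ord_brk_neg_ge (p : ℕ) (hp : p.Prime) (z : ℚ) (hz : ¬ p ∣ z.den)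
    (l : ℤ) (hl : l < 0) :
    ((((-l : ℤ) : ℚ) - ((Nat.digits p (-l).toNat).sum : ℚ)) / ((p : ℚ) - 1) : WithTop ℚ) ≤
      ordQ p (brkQ z l) := by
  haveI : Fact p.Prime := ⟨hp⟩
  set m : ℕ := (-l).toNat with hm
  have hbrk : brkQ z l = ∏ k ∈ Finset.range m, (z - (k : ℚ)) := by
    rw [brkQ, if_neg (by omega)]
  by_cases h0 : brkQ z l = 0
  · rw [ordQ, if_pos h0]; exact le_top
  rw [ordQ, if_neg h0]
  refine WithTop.coe_le_coe.mpr ?_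
  have hml : ((-l : ℤ) : ℚ) = (m : ℚ) := by
    have h1 : ((m : ℕ) : ℤ) = -l := Int.toNat_of_nonneg (by omega)
    exact_mod_cast (congrArg (fun x : ℤ => (x : ℚ)) h1).symm
  rw [hml]
  -- Legendre
  have hs_le : (Nat.digits p m).sum ≤ m := Nat.digit_sum_le p m
  have hleg := sub_one_mul_padicValNat_factorial (p := p) m
  have hp1 : (1 : ℕ) ≤ p := hp.one_lt.le
  have hlegQ : ((p : ℚ) - 1) * (padicValNat p (Nat.factorial m) : ℚ)
      = (m : ℚ) - ((Nat.digits p m).sum : ℚ) := by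
    have := congrArg (fun n : ℕ => (n : ℚ)) hleg
    push_cast [Nat.cast_sub hs_le, Nat.cast_sub hp1] at this
    rw [← Nat.cast_list_sum] at this
    linarith [this]
  have hpQ : (0 : ℚ) < (p : ℚ) - 1 := by
    have : (2 : ℚ) ≤ (p : ℚ) := by exact_mod_cast hp.two_le
    linarith
  rw [div_le_iff₀ hpQ]
  -- now goal: m - s ≤ v * (p - 1)
  -- main valuation bound
  have hden0 : (z.den : ℚ) ≠ 0 := by exact_mod_cast z.den_nz
  set A : ℤ := ∏ k ∈ Finset.range m, (z.num - (k : ℤ) * (z.den : ℤ)) with hAdef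
  have hAeq : ((A : ℤ) : ℚ) = brkQ z l * (z.den : ℚ) ^ m := by
    rw [hbrk, hAdef]
    push_cast
    rw [show ((z.den : ℚ) ^ m) = ∏ _x ∈ Finset.range m, (z.den : ℚ) by
      rw [Finset.prod_const, Finset.card_range], ← Finset.prod_mul_distrib]
    have hnum : (z.num : ℚ) = z * (z.den : ℚ) := (Rat.mul_den_eq_num z).symm
    refine (Finset.prod_congr rfl fun k _ => ?_)
    rw [hnum]; ring
  have hA0 : A ≠ 0 := by
    intro h
    rw [h] at hAeq
    simp only [Int.cast_zero] at hAeq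
    exact h0 (by
      have := hAeq.symm
      rcases mul_eq_zero.mp this with h1 | h1
      · exact h1
      · exact absurd h1 (pow_ne_zero _ hden0))
  have hkey := padicValNat_factorial_le_aux p hp z hz m hA0
  -- padicValRat of brkQ equals that of A
  have hvden : padicValRat p ((z.den : ℚ) ^ m) = 0 := by
    have h1 : padicValRat p ((z.den : ℚ)) = 0 := by
      have : ((z.den : ℚ)) = (((z.den : ℤ)) : ℚ) := by push_cast; ring
      rw [this, padicValRat.of_int]
      have : padicValInt p (z.den : ℤ) = padicValNat p z.den := by
        rw [padicValInt, Int.natAbs_natCast]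
      rw [this, padicValNat.eq_zero_of_not_dvd hz]
      rfl
    rw [padicValRat.pow (p := p) (z.den : ℚ), h1, mul_zero]
  have hvA : padicValRat p ((A : ℤ) : ℚ) = padicValRat p (brkQ z l) := by
    rw [hAeq, padicValRat.mul h0 (pow_ne_zero _ hden0), hvden, add_zero]
  rw [hvA] at hkey
  -- combine
  calc (m : ℚ) - ((Nat.digits p m).sum : ℚ)
      = ((p : ℚ) - 1) * (padicValNat p (Nat.factorial m) : ℚ) := hlegQ.symm
    _ ≤ ((p : ℚ) - 1) * ((padicValRat p (brkQ z l) : ℤ) : ℚ) := by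
        have h1 : ((padicValNat p (Nat.factorial m) : ℚ)) ≤ ((padicValRat p (brkQ z l) : ℤ) : ℚ) := by
          have h2 : ((padicValNat p (Nat.factorial m) : ℤ) : ℚ) ≤ ((padicValRat p (brkQ z l) : ℤ) : ℚ) :=
            Int.cast_le.mpr hkey
          rwa [Int.cast_natCast] at h2
        exact mul_le_mul_of_nonneg_left h1 (le_of_lt hpQ)
    _ = ((padicValRat p (brkQ z l) : ℤ) : ℚ) * ((p : ℚ) - 1) := by ring
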